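/- Let U ⊆ ℝ^n be an open connected set. Then ℝ^n \ U is connected if and only if the boundary ∂U is connected. -/

import Mathlib

/-!
A closed set with preconnected frontier in a preconnected space is preconnected: a piece of a
separation that misses the frontier lies in the interior, so it is clopen in the whole space.
Applied to `Uᶜ`, whose frontier is `∂U`, this gives one direction.

For the other, `ℝⁿ` is simply connected, so maps to the circle `ℝ/ℤ` lift to `ℝ`. Let `h` be
real-valued and integral on `∂U`. Modulo `1`, `h/2` on `closure U` and `-h/2` on `Uᶜ` glue to a
continuous circle-valued map; for a lift `g`, the functions `g - h/2` and `g + h/2` are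
integer-valued on the connected sets `closure U` and `Uᶜ`, hence constant there, and so is their
difference `h` on `∂U`. By Urysohn's lemma a separation of `∂U` would give such an `h` taking the
values `0` and `1`.
-/

open Set

section Unicoherence

variable {X : Type*} [TopologicalSpace X]

lemma IsClosed.subset_or_subset_of_frontier_subset [PreconnectedSpace X] {C A B : Set X}
    (hC : IsClosed C) (hA : IsClosed A) (hB : IsClosed B) (hcov : C ⊆ A ∪ B) (hAB : Disjoint A B)
    (hfr : frontier C ⊆ A) : C ⊆ A ∨ C ⊆ B := by
  have hCB : C ∩ B = interior C ∩ Aᶜ := by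
    ext x
    constructor
    · rintro ⟨hxC, hxB⟩
      have hxA : x ∉ A := hAB.notMem_of_mem_right hxB
      exact ⟨by_contra fun hxi ↦ hxA (hfr ⟨subset_closure hxC, hxi⟩), hxA⟩
    · rintro ⟨hxi, hxA⟩
      exact ⟨interior_subset hxi, (hcov (interior_subset hxi)).resolve_left hxA⟩
  have hCB_clopen : IsClopen (C ∩ B) := ⟨hC.inter hB, hCB ▸ isOpen_interior.inter hA.isOpen_compl⟩
  rcases isClopen_iff.mp hCB_clopen with h | h
  · exact .inl fun x hx ↦ (hcov hx).resolve_right fun hxB ↦ h.subset ⟨hx, hxB⟩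
  · exact .inr fun x _ ↦ (h.symm.subset (mem_univ x)).2

theorem IsClosed.isPreconnected_of_isPreconnected_frontier [PreconnectedSpace X] {C : Set X}
    (hC : IsClosed C) (hfr : IsPreconnected (frontier C)) : IsPreconnected C := by
  rw [isPreconnected_iff_subset_of_fully_disjoint_closed hC]
  intro A B hA hB hcov hAB
  rcases (isPreconnected_iff_subset_of_fully_disjoint_closed isClosed_frontier).mp hfr A B hA hB
    (hC.frontier_subset.trans hcov) hAB with h | h
  · exact hC.subset_or_subset_of_frontier_subset hA hB hcov hAB h
  · exact (hC.subset_or_subset_of_frontier_subset hB hA (union_comm A B ▸ hcov) hAB.symm h).symm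

lemma AddCircle.coe_eq_zero_iff_mem_range_intCast {x : ℝ} :
    (x : AddCircle (1 : ℝ)) = 0 ↔ x ∈ range ((↑) : ℤ → ℝ) := by
  simp [AddSubgroup.mem_zmultiples_iff]

lemma AddCircle.exists_lift [SimplyConnectedSpace X] [LocallyPathConnectedSpace X]
    (φ : C(X, AddCircle (1 : ℝ))) : ∃ g : C(X, ℝ), ∀ x, (g x : AddCircle (1 : ℝ)) = φ x := by
  obtain ⟨x₀⟩ := (inferInstance : Nonempty X)
  obtain ⟨e₀, he₀⟩ := QuotientAddGroup.mk_surjective (φ x₀)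
  obtain ⟨g, -, hg⟩ :=
    ((AddCircle.isCoveringMap_coe (1 : ℝ)).existsUnique_continuousMap_lifts φ x₀ e₀ he₀).exists
  exact ⟨g, congrFun hg⟩

lemma IsPreconnected.eq_of_mapsTo_range_intCast {s : Set X} (hs : IsPreconnected s) {f : X → ℝ}
    (hf : ContinuousOn f s) (hint : MapsTo f s (range ((↑) : ℤ → ℝ))) {x y : X} (hx : x ∈ s)
    (hy : y ∈ s) : f x = f y :=
  hs.constant_of_mapsTo Int.isClosedEmbedding_coe_real.isInducing.isDiscrete_range hf hint hx hy

lemma IsClosed.isPreconnected_of_forall_mapsTo_range_intCast [NormalSpace X] {S : Set X}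
    (hS : IsClosed S)
    (hconst : ∀ f : C(X, ℝ), MapsTo f S (range ((↑) : ℤ → ℝ)) → ∀ x ∈ S, ∀ y ∈ S, f x = f y) :
    IsPreconnected S := by
  rw [isPreconnected_iff_subset_of_fully_disjoint_closed hS]
  intro A B hA hB hcov hAB
  by_contra! ⟨hSA, hSB⟩
  obtain ⟨a, haS, haA⟩ := not_subset.mp hSA
  obtain ⟨b, hbS, hbB⟩ := not_subset.mp hSB
  obtain ⟨f, hf0, hf1, -⟩ := exists_continuous_zero_one_of_isClosed hA hB hAB
  have hint : MapsTo f S (range ((↑) : ℤ → ℝ)) := fun x hx ↦ by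
    rcases hcov hx with hxA | hxB
    · exact ⟨0, by simp [hf0 hxA]⟩
    · exact ⟨1, by simp [hf1 hxB]⟩
  have hfa : f a = 1 := hf1 ((hcov haS).resolve_left haA)
  have hfb : f b = 0 := hf0 ((hcov hbS).resolve_right hbB)
  simpa [hfa, hfb] using hconst f hint a haS b hbS

lemma eq_of_mem_frontier_of_mapsTo_range_intCast [SimplyConnectedSpace X]
    [LocallyPathConnectedSpace X] {U : Set X} (hU : IsPreconnected (closure U))
    (hUc : IsPreconnected (closure Uᶜ)) (h : C(X, ℝ))
    (hint : MapsTo h (frontier U) (range ((↑) : ℤ → ℝ))) {a b : X} (ha : a ∈ frontier U)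
    (hb : b ∈ frontier U) : h a = h b := by
  classical
  rw [frontier_eq_closure_inter_closure] at hint ha hb
  have hagree : ∀ x ∈ closure U ∩ closure Uᶜ,
      ((h x / 2 : ℝ) : AddCircle (1 : ℝ)) = ((-(h x / 2) : ℝ) : AddCircle (1 : ℝ)) := by
    intro x hx
    rw [← sub_eq_zero, ← AddCircle.coe_sub, sub_neg_eq_add, add_halves,
      AddCircle.coe_eq_zero_iff_mem_range_intCast]
    exact hint hx
  let φ : C(X, AddCircle (1 : ℝ)) :=
    ⟨fun x ↦ if x ∈ U then ((h x / 2 : ℝ) : AddCircle (1 : ℝ)) else ((-(h x / 2) : ℝ) : _),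
      Continuous.if (fun x hx ↦ hagree x (by rwa [← frontier_eq_closure_inter_closure]))
        (by fun_prop) (by fun_prop)⟩
  obtain ⟨g, hg⟩ := AddCircle.exists_lift φ
  have hφ₁ : ∀ x ∈ closure U, φ x = ((h x / 2 : ℝ) : AddCircle (1 : ℝ)) := by
    intro x hx
    by_cases hxU : x ∈ U
    · exact if_pos hxU
    · exact (if_neg hxU).trans (hagree x ⟨hx, subset_closure hxU⟩).symm
  have hφ₂ : ∀ x ∈ closure Uᶜ, φ x = ((-(h x / 2) : ℝ) : AddCircle (1 : ℝ)) := by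
    intro x hx
    by_cases hxU : x ∈ U
    · exact (if_pos hxU).trans (hagree x ⟨subset_closure hxU, hx⟩)
    · exact if_neg hxU
  have hint₁ : MapsTo (fun x ↦ g x - h x / 2) (closure U) (range ((↑) : ℤ → ℝ)) := by
    intro x hx
    rw [← AddCircle.coe_eq_zero_iff_mem_range_intCast, AddCircle.coe_sub, hg, hφ₁ x hx, sub_self]
  have hint₂ : MapsTo (fun x ↦ g x + h x / 2) (closure Uᶜ) (range ((↑) : ℤ → ℝ)) := by
    intro x hx
    rw [← AddCircle.coe_eq_zero_iff_mem_range_intCast, AddCircle.coe_add, hg, hφ₂ x hx,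
      AddCircle.coe_neg, neg_add_cancel]
  have h₁ := hU.eq_of_mapsTo_range_intCast (by fun_prop) hint₁ ha.1 hb.1
  have h₂ := hUc.eq_of_mapsTo_range_intCast (by fun_prop) hint₂ ha.2 hb.2
  linarith

theorem isPreconnected_frontier_of_isPreconnected_closure [SimplyConnectedSpace X]
    [LocallyPathConnectedSpace X] [NormalSpace X] {U : Set X} (hU : IsPreconnected (closure U))
    (hUc : IsPreconnected (closure Uᶜ)) : IsPreconnected (frontier U) :=
  isClosed_frontier.isPreconnected_of_forall_mapsTo_range_intCast fun h hint _ ha _ hb ↦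
    eq_of_mem_frontier_of_mapsTo_range_intCast hU hUc h hint ha hb

end Unicoherence

theorem compl_connected_iff_frontier_connected (n : ℕ)
    (U : Set (EuclideanSpace ℝ (Fin n))) (hU : IsOpen U) (hUc : IsConnected U) :
    IsPreconnected Uᶜ ↔ IsPreconnected (frontier U) := by
  refine ⟨fun hC ↦ ?_, fun hF ↦ ?_⟩
  · exact isPreconnected_frontier_of_isPreconnected_closure hUc.isPreconnected.closure
      (hU.isClosed_compl.closure_eq.symm ▸ hC)
  · exact hU.isClosed_compl.isPreconnected_of_isPreconnected_frontier (frontier_compl U ▸ hF)
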